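/- arXiv:1612.09143 — 5 statements merged into one kernel-verified Lean document; each statement's English description precedes it below -/
import Mathlib

section
/- The clique number of the (k,t)-tower T_{k,t} equals k-2, for k ≥ 4 and t ≥ 1. -/
/-- Valid vertices of the `(k,t)`-tower: the base `V₀ = {(0,0),(0,1)}` and
levels `V_i = {(i,j) : j ≤ k-2}` for `1 ≤ i ≤ t`. -/
def towerValid (k t : ℕ) (p : ℕ × ℕ) : Prop :=
  (p.1 = 0 ∧ p.2 < 2) ∨ (1 ≤ p.1 ∧ p.1 ≤ t ∧ p.2 ≤ k - 2)

/-- Vertices of the `(k,t)`-tower. -/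
def TowerVertex (k t : ℕ) : Type := {p : ℕ × ℕ // towerValid k t p}

/-- One-directional adjacency of the tower: within a level `i ≥ 1` it is
`K_{k-1}` minus the edge `v_{i,0}v_{i,1}`; `v_{i-1,0}` is joined to `v_{i,j}`
for `j ≤ ⌊(k-2)/2⌋` and `v_{i-1,1}` to `v_{i,j}` for `⌈(k-1)/2⌉ = ⌊k/2⌋ ≤ j ≤ k-2`. -/
def towerAdjAux (k : ℕ) (p q : ℕ × ℕ) : Prop :=
  (p.1 = q.1 ∧ 1 ≤ p.1 ∧ p.2 ≠ q.2 ∧ ¬(p.2 ≤ 1 ∧ q.2 ≤ 1)) ∨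
  (q.1 = p.1 + 1 ∧ ((p.2 = 0 ∧ q.2 ≤ (k - 2) / 2) ∨ (p.2 = 1 ∧ k / 2 ≤ q.2)))

/-- The `(k,t)`-tower `T_{k,t}` as a simple graph. -/
def towerGraph (k t : ℕ) : SimpleGraph (TowerVertex k t) where
  Adj x y := towerAdjAux k x.1 y.1 ∨ towerAdjAux k y.1 x.1
  symm := ⟨fun x y h => Or.symm h⟩
  loopless := by
    constructor
    rintro ⟨⟨i, j⟩, hv⟩ h
    simp [towerAdjAux] at h

/-!
Level 1 without `v_{1,0}` is a clique on `k - 2` vertices. Conversely, adjacent vertices lie on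
equal or consecutive levels, so a clique lives on two levels `m` and `m + 1`; a vertex of level
`m + 1` is seen from level `m` only through `v_{m,0}` (indices `≤ (k - 2) / 2`) or `v_{m,1}`
(indices `≥ k / 2`). Relabelling indices `j ≥ 2` as `j - 1` and sending `{v_{m,0}, v_{m,1}}`,
resp. `{v_{m+1,0}, v_{m+1,1}}`, to `0`, resp. `(k - 2) / 2`, is then injective on the clique,
with values below `k - 2`.
-/

open Finset SimpleGraph

theorem towerGraph_levelOne_isContained {k t : ℕ} (ht : 1 ≤ t) :
    completeGraph (Fin (k - 2)) ⊑ towerGraph k t := by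
  refine ⟨Hom.toCopy ⟨fun i => ⟨(1, i + 1), Or.inr ⟨le_rfl, ht, by omega⟩⟩, ?_⟩ ?_⟩
  · intro i j hij
    have : (i : ℕ) ≠ j := Fin.val_ne_of_ne hij
    refine Or.inl (Or.inl ⟨rfl, le_rfl, ?_, ?_⟩) <;> simp only <;> omega
  · intro i j hij
    exact Fin.ext (Nat.succ_injective (congrArg (fun x : TowerVertex k t => x.1.2) hij))

theorem towerGraph_exists_isNClique {k t : ℕ} (ht : 1 ≤ t) :
    ∃ s : Finset (TowerVertex k t), (towerGraph k t).IsNClique (k - 2) s := by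
  simpa [CliqueFree] using (towerGraph_levelOne_isContained ht).not_cliqueFree

theorem towerAdjAux_level {k : ℕ} {p q : ℕ × ℕ} (h : towerAdjAux k p q) :
    q.1 = p.1 ∨ q.1 = p.1 + 1 := by
  unfold towerAdjAux at h
  omega

theorem eq_level_or_towerAdjAux_of_isClique {k t : ℕ} {s : Finset (TowerVertex k t)}
    (hs : (towerGraph k t).IsClique s) {w v : TowerVertex k t} (hw : w ∈ s) (hv : v ∈ s)
    (hwv : w.1.1 ≤ v.1.1) : v.1.1 = w.1.1 ∨ towerAdjAux k w.1 v.1 := by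
  obtain rfl | hne := eq_or_ne w v
  · exact Or.inl rfl
  rcases hs hw hv hne with h | h
  · exact Or.inr h
  · have := towerAdjAux_level h
    omega

def towerSlot (k m : ℕ) (p : ℕ × ℕ) : ℕ :=
  if p.2 ≤ 1 then (if p.1 = m then 0 else (k - 2) / 2) else p.2 - 1

theorem towerSlot_lt {k t : ℕ} (hk : 4 ≤ k) (m : ℕ) (x : TowerVertex k t) :
    towerSlot k m x.1 < k - 2 := by
  have hx := x.2
  unfold towerValid at hx
  unfold towerSlot
  split_ifs <;> omega

theorem towerSlot_ne_of_towerAdjAux {k : ℕ} {w p q : ℕ × ℕ} (hk : 4 ≤ k)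
    (hp : p.1 = w.1 ∨ towerAdjAux k w p) (hq : q.1 = w.1 ∨ towerAdjAux k w q)
    (hpq : towerAdjAux k p q) : towerSlot k w.1 p ≠ towerSlot k w.1 q := by
  unfold towerAdjAux at hp hq hpq
  unfold towerSlot
  split_ifs <;> omega

theorem towerGraph_card_le_of_isClique {k t : ℕ} (hk : 4 ≤ k) {s : Finset (TowerVertex k t)}
    (hs : (towerGraph k t).IsClique s) : #s ≤ k - 2 := by
  obtain rfl | hne := s.eq_empty_or_nonempty
  · simp
  obtain ⟨w, hw, hmin⟩ := s.exists_min_image (fun v => v.1.1) hne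
  have hslot : Set.InjOn (fun v : TowerVertex k t => towerSlot k w.1.1 v.1) s := by
    intro u hu v hv huv
    by_contra hne
    have hu' := eq_level_or_towerAdjAux_of_isClique hs hw hu (hmin u hu)
    have hv' := eq_level_or_towerAdjAux_of_isClique hs hw hv (hmin v hv)
    rcases hs hu hv hne with h | h
    · exact towerSlot_ne_of_towerAdjAux hk hu' hv' h huv
    · exact towerSlot_ne_of_towerAdjAux hk hv' hu' h huv.symm
  simpa using card_le_card_of_injOn _ (fun v _ => mem_range.2 (towerSlot_lt hk w.1.1 v)) hslot

/-- The clique number of the `(k,t)`-tower equals `k-2`: there is a clique on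
`k-2` vertices and every clique has at most `k-2` vertices. -/
theorem tower_cliqueNumber (k t : ℕ) (hk : 4 ≤ k) (ht : 1 ≤ t) :
    (∃ s : Finset (TowerVertex k t), (towerGraph k t).IsNClique (k - 2) s) ∧
    (∀ s : Finset (TowerVertex k t), (towerGraph k t).IsClique ↑s → s.card ≤ k - 2) :=
  ⟨towerGraph_exists_isNClique ht, fun _ => towerGraph_card_le_of_isClique hk⟩
end

section
/- For every subset A of the vertices of the (k,t)-tower T = T_{k,t} with |A| ≥ 2, the potential ρ_{k,T}(A) = (k+1)(k-2)|A| - 2(k-1)|E(T[A])| satisfies ρ_{k,T}(A) ≥ 2(k+1)(k-2) - 2(k-1). Moreover, if A contains the base V₀ = {v_{0,0}, v_{0,1}}, then ρ_{k,T}(A) ≥ 2(k+1)(k-2). -/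
/-- The number of edges of `G` with both endpoints in `A`. -/
noncomputable def edgeCountOn {V : Type*} (G : SimpleGraph V) (A : Set V) : ℕ :=
  {e ∈ G.edgeSet | ∀ v ∈ e, v ∈ A}.ncard

/-- The potential `ρ_{k,G}(A) = (k+1)(k-2)|A| - 2(k-1)|E(G[A])|`. -/
noncomputable def potential {V : Type*} (k : ℕ) (G : SimpleGraph V) (A : Finset V) : ℤ :=
  ((k : ℤ) + 1) * ((k : ℤ) - 2) * A.card - 2 * ((k : ℤ) - 1) * edgeCountOn G ↑A

open Finset

section EdgesInside

variable {V : Type*} (G : SimpleGraph V) [DecidableRel G.Adj]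

def edgeFinsetOn (S : Finset V) : Finset (Sym2 V) := {e ∈ S.sym2 | e ∈ G.edgeSet}

lemma card_edgeFinsetOn (S : Finset V) : #(edgeFinsetOn G S) = edgeCountOn G ↑S := by
  rw [edgeCountOn, ← Set.ncard_coe_finset]
  congr 1
  ext e
  simp [edgeFinsetOn, Finset.mem_sym2_iff, and_comm]

lemma edgeFinsetOn_subset_image_offDiag [DecidableEq V] (S : Finset V) :
    edgeFinsetOn G S ⊆ S.offDiag.image Sym2.mk.uncurry := by
  intro e he
  induction e using Sym2.ind with
  | _ u v =>
    simp only [edgeFinsetOn, mem_filter, mk_mem_sym2_iff, SimpleGraph.mem_edgeSet] at he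
    exact mem_image.2 ⟨(u, v), mem_offDiag.2 ⟨he.1.1, he.1.2, he.2.ne⟩, rfl⟩

theorem two_mul_edgeCountOn_add_card_le [DecidableEq V] (S : Finset V) :
    2 * edgeCountOn G ↑S + #S ≤ #S * #S := by
  have hsub := card_le_card (edgeFinsetOn_subset_image_offDiag G S)
  have hpairs := Sym2.two_mul_card_image_offDiag S
  rw [offDiag_card] at hpairs
  rw [card_edgeFinsetOn] at hsub
  have := Nat.le_mul_self #S
  omega

theorem two_mul_edgeCountOn_add_card_add_two_le [DecidableEq V] {S : Finset V} {u v : V}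
    (hu : u ∈ S) (hv : v ∈ S) (huv : u ≠ v) (hadj : ¬ G.Adj u v) :
    2 * edgeCountOn G ↑S + #S + 2 ≤ #S * #S := by
  have hsub : edgeFinsetOn G S ⊆ (S.offDiag.image Sym2.mk.uncurry).erase s(u, v) := by
    intro e he
    refine mem_erase.2 ⟨?_, edgeFinsetOn_subset_image_offDiag G S he⟩
    rintro rfl
    simp [edgeFinsetOn, hadj] at he
  have hmem : s(u, v) ∈ S.offDiag.image Sym2.mk.uncurry := mem_image.2 ⟨(u, v), by simp [*], rfl⟩
  have hcard := card_le_card hsub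
  rw [card_erase_of_mem hmem, card_edgeFinsetOn] at hcard
  have hpairs := Sym2.two_mul_card_image_offDiag S
  rw [offDiag_card] at hpairs
  have hpos : 1 ≤ #(S.offDiag.image Sym2.mk.uncurry) := card_pos.2 ⟨_, hmem⟩
  have := Nat.le_mul_self #S
  omega

end EdgesInside

section Layers

variable {V : Type*}

def layer (f : V → ℕ) (A : Finset V) (i : ℕ) : Finset V := {v ∈ A | f v = i}

-- Not `layer f A (i - 1)`, which at `i = 0` would be layer `0` itself.
def layerBelow (f : V → ℕ) (A : Finset V) (i : ℕ) : Finset V := {v ∈ A | f v + 1 = i}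

@[simp] lemma mem_layer (f : V → ℕ) {A : Finset V} {i : ℕ} {v : V} :
    v ∈ layer f A i ↔ v ∈ A ∧ f v = i :=
  mem_filter

@[simp] lemma mem_layerBelow (f : V → ℕ) {A : Finset V} {i : ℕ} {v : V} :
    v ∈ layerBelow f A i ↔ v ∈ A ∧ f v + 1 = i :=
  mem_filter

lemma layerBelow_eq_empty (f : V → ℕ) {A : Finset V} {i : ℕ} (h : ∀ v ∈ A, i ≤ f v) :
    layerBelow f A i = ∅ :=
  filter_eq_empty_iff.2 fun v hv hlt => by have := h v hv; omega

def potentialOfCounts (k a e : ℕ) : ℤ :=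
  ((k : ℤ) + 1) * ((k : ℤ) - 2) * a - 2 * ((k : ℤ) - 1) * e

noncomputable def layerPotential (k : ℕ) (G : SimpleGraph V) [DecidableRel G.Adj] (f : V → ℕ)
    (A : Finset V) (i : ℕ) : ℤ :=
  potentialOfCounts k #(layer f A i)
    (edgeCountOn G ↑(layer f A i) + #(G.interedges (layerBelow f A i) (layer f A i)))

variable [DecidableEq V] (G : SimpleGraph V) [DecidableRel G.Adj] (f : V → ℕ)

theorem edgeCountOn_le_sum_layers (hf : ∀ ⦃u v⦄, G.Adj u v → f v ≤ f u + 1) (A : Finset V)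
    {n : ℕ} (hA : ∀ v ∈ A, f v < n) :
    edgeCountOn G ↑A ≤ ∑ i ∈ range n,
      (edgeCountOn G ↑(layer f A i) + #(G.interedges (layerBelow f A i) (layer f A i))) := by
  simp_rw [← card_edgeFinsetOn]
  calc #(edgeFinsetOn G A)
      ≤ #((range n).biUnion fun i => edgeFinsetOn G (layer f A i) ∪
          (G.interedges (layerBelow f A i) (layer f A i)).image Sym2.mk.uncurry) := by
        refine card_le_card fun e he => ?_
        induction e using Sym2.ind with
        | _ u v =>
          simp only [edgeFinsetOn, mem_filter, mk_mem_sym2_iff, SimpleGraph.mem_edgeSet] at he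
          obtain ⟨⟨hu, hv⟩, hadj⟩ := he
          have hvu := hf hadj
          have huv := hf hadj.symm
          simp only [mem_biUnion, mem_range, mem_union, edgeFinsetOn, mem_filter,
            mk_mem_sym2_iff, mem_layer, SimpleGraph.mem_edgeSet, mem_image,
            SimpleGraph.mem_interedges_iff, mem_layerBelow, Prod.exists,
            Function.uncurry_apply_pair]
          rcases (show f u = f v ∨ f u + 1 = f v ∨ f v + 1 = f u by omega) with h | h | h
          · exact ⟨f u, hA u hu, Or.inl ⟨⟨⟨hu, rfl⟩, hv, h.symm⟩, hadj⟩⟩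
          · exact ⟨f v, hA v hv, Or.inr ⟨u, v, ⟨⟨hu, h⟩, ⟨hv, rfl⟩, hadj⟩, rfl⟩⟩
          · exact ⟨f u, hA u hu, Or.inr ⟨v, u, ⟨⟨hv, h⟩, ⟨hu, rfl⟩, hadj.symm⟩, Sym2.eq_swap⟩⟩
    _ ≤ _ := card_biUnion_le
    _ ≤ _ := sum_le_sum fun i _ => (card_union_le _ _).trans (Nat.add_le_add_left card_image_le _)

theorem sum_layerPotential_le_potential {k : ℕ} (hk : 1 ≤ k)
    (hf : ∀ ⦃u v⦄, G.Adj u v → f v ≤ f u + 1) (A : Finset V) {n : ℕ}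
    (hA : ∀ v ∈ A, f v < n) :
    ∑ i ∈ range n, layerPotential k G f A i ≤ potential k G A := by
  have hcard : (#A : ℤ) = ∑ i ∈ range n, (#(layer f A i) : ℤ) := by
    exact_mod_cast card_eq_sum_card_fiberwise fun v hv => mem_range.2 (hA v hv)
  have hedges : (edgeCountOn G ↑A : ℤ) ≤ ∑ i ∈ range n, ((edgeCountOn G ↑(layer f A i) +
      #(G.interedges (layerBelow f A i) (layer f A i)) : ℕ) : ℤ) := by
    exact_mod_cast edgeCountOn_le_sum_layers G f hf A hA
  have hk' : (0 : ℤ) ≤ 2 * ((k : ℤ) - 1) := by omega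
  simp only [layerPotential, potentialOfCounts, potential, sum_sub_distrib, ← mul_sum, hcard]
  linarith [mul_le_mul_of_nonneg_left hedges hk']

end Layers

-- The counts of a level `Vᵢ ∩ A` of a tower: `a` vertices, `s` of them ends of the missing edge,
-- `w` edges inside the level and `x` edges down to the level below.
structure LevelCounts (k a s w x : ℕ) : Prop where
  four_le : 4 ≤ k
  anchors_le : s ≤ 2
  card_le : a ≤ s + (k - 3)
  edges_le : 2 * w + a ≤ a * a
  edges_le_of_anchors_eq_two : s = 2 → 2 * w + a + 2 ≤ a * a
  cross_le : x ≤ a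

namespace LevelCounts

variable {k a s w x : ℕ}

lemma dichotomy (h : LevelCounts k a s w x) :
    (s ≤ 1 ∧ (a : ℤ) + 2 ≤ k ∧ 2 * (w : ℤ) + a ≤ a * a) ∨
      (s = 2 ∧ (a : ℤ) + 1 ≤ k ∧ 2 * (w : ℤ) + a + 2 ≤ a * a) := by
  have := h.card_le
  have := h.four_le
  rcases (show s ≤ 1 ∨ s = 2 by have := h.anchors_le; omega) with hs | hs
  · exact Or.inl ⟨hs, by omega, by exact_mod_cast h.edges_le⟩
  · exact Or.inr ⟨hs, by omega, by exact_mod_cast h.edges_le_of_anchors_eq_two hs⟩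

theorem potential_nonneg (h : LevelCounts k a s w x) : 0 ≤ potentialOfCounts k a (w + x) := by
  have hk : (4 : ℤ) ≤ k := by exact_mod_cast h.four_le
  have hx : (x : ℤ) ≤ a := by exact_mod_cast h.cross_le
  have hx0 : (0 : ℤ) ≤ x := by positivity
  unfold potentialOfCounts
  push_cast
  rcases h.dichotomy with ⟨-, ha, hw⟩ | ⟨-, ha, hw⟩
  · -- at most `k - 2` vertices, each of potential at least `k - 3`
    nlinarith [mul_nonneg (by linarith : (0 : ℤ) ≤ a) (by linarith : (0 : ℤ) ≤ k - 2 - a)]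
  · nlinarith [mul_nonneg (by linarith : (0 : ℤ) ≤ k - 1 - a)
      (by nlinarith : (0 : ℤ) ≤ (k - 1) * a + 2)]

theorem two_mul_sub_le_potential (h : LevelCounts k a s w x) (hx : x = 0) (ha : 2 ≤ a) :
    2 * ((k : ℤ) + 1) * ((k : ℤ) - 2) - 2 * ((k : ℤ) - 1) ≤ potentialOfCounts k a (w + x) := by
  have hk : (4 : ℤ) ≤ k := by exact_mod_cast h.four_le
  have ha' : (2 : ℤ) ≤ a := by exact_mod_cast ha
  subst hx
  unfold potentialOfCounts
  push_cast
  rcases h.dichotomy with ⟨-, ha, hw⟩ | ⟨-, ha, hw⟩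
  · nlinarith [mul_nonneg (by linarith : (0 : ℤ) ≤ a - 2) (by linarith : (0 : ℤ) ≤ k - 2 - a)]
  · nlinarith [mul_nonneg (by linarith : (0 : ℤ) ≤ a - 2) (by linarith : (0 : ℤ) ≤ k - 1 - a)]

theorem le_potential (h : LevelCounts k a s w x) (hx : x = 0) (ha : 1 ≤ a) :
    ((k : ℤ) + 1) * ((k : ℤ) - 2) ≤ potentialOfCounts k a (w + x) := by
  have hk : (4 : ℤ) ≤ k := by exact_mod_cast h.four_le
  rcases (show a = 1 ∨ 2 ≤ a by omega) with rfl | ha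
  · have hw : w = 0 := by have := h.edges_le; omega
    simp [potentialOfCounts, hw, hx]
  · nlinarith [h.two_mul_sub_le_potential hx ha]

theorem sub_le_potential (h : LevelCounts k a s w x) (ha : 1 ≤ a)
    (hx : 2 * x + 4 ≤ 2 * s + k ∨ 2 * x + 1 ≤ k) :
    ((k : ℤ) + 1) * ((k : ℤ) - 2) - 2 * ((k : ℤ) - 1) ≤ potentialOfCounts k a (w + x) := by
  have hk : (4 : ℤ) ≤ k := by exact_mod_cast h.four_le
  have hxa : (x : ℤ) ≤ a := by exact_mod_cast h.cross_le
  unfold potentialOfCounts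
  push_cast
  rcases h.dichotomy with ⟨hs, ha', hw⟩ | ⟨rfl, ha', hw⟩
  · have hx' : 2 * (x : ℤ) + 1 ≤ k := by omega
    rcases (show a = 1 ∨ 2 ≤ a by omega) with rfl | ha2
    · have hwx : (w : ℤ) + x ≤ 1 := by push_cast at hw hxa; linarith
      push_cast
      nlinarith [mul_le_mul_of_nonneg_left hwx (by linarith : (0 : ℤ) ≤ k - 1)]
    · have ha2' : (2 : ℤ) ≤ a := by exact_mod_cast ha2
      nlinarith [mul_nonneg (mul_nonneg (by linarith : (0 : ℤ) ≤ k - 1)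
          (by linarith : (0 : ℤ) ≤ a - 2)) (by linarith : (0 : ℤ) ≤ k - 2 - a),
        mul_nonneg (by linarith : (0 : ℤ) ≤ k - 3) (by linarith : (0 : ℤ) ≤ a - 1),
        mul_nonneg (by linarith : (0 : ℤ) ≤ k - 1) (by linarith : (0 : ℤ) ≤ k - 1 - 2 * x)]
  · have hx' : 2 * (x : ℤ) ≤ k := by omega
    have ha2 : (2 : ℤ) ≤ a := by nlinarith
    nlinarith [mul_nonneg (mul_nonneg (by linarith : (0 : ℤ) ≤ k - 1)
        (by linarith : (0 : ℤ) ≤ a - 2)) (by linarith : (0 : ℤ) ≤ k - 1 - a),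
      mul_nonneg (by linarith : (0 : ℤ) ≤ k - 1) (by linarith : (0 : ℤ) ≤ k - 2 * x)]

end LevelCounts

namespace TowerVertex

variable {k t : ℕ}

instance : DecidableEq (TowerVertex k t) :=
  inferInstanceAs (DecidableEq {p : ℕ × ℕ // towerValid k t p})

instance (p q : ℕ × ℕ) : Decidable (towerAdjAux k p q) := by
  unfold towerAdjAux; infer_instance

instance : DecidableRel (towerGraph k t).Adj := fun x y =>
  inferInstanceAs (Decidable (towerAdjAux k x.1 y.1 ∨ towerAdjAux k y.1 x.1))

lemma fst_le (v : TowerVertex k t) : v.1.1 ≤ t := by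
  rcases v.2 with ⟨h, _⟩ | ⟨_, h, _⟩ <;> omega

lemma snd_le (hk : 3 ≤ k) (v : TowerVertex k t) : v.1.2 ≤ k - 2 := by
  rcases v.2 with ⟨_, h⟩ | ⟨_, _, h⟩ <;> omega

lemma fst_le_fst_add_one_of_adj {u v : TowerVertex k t} (h : (towerGraph k t).Adj u v) :
    v.1.1 ≤ u.1.1 + 1 := by
  rcases h with (h | h) | (h | h) <;> omega

lemma not_adj_of_snd_eq_zero_one {u v : TowerVertex k t} (hlevel : u.1.1 = v.1.1)
    (hu : u.1.2 = 0) (hv : v.1.2 = 1) : ¬ (towerGraph k t).Adj u v := by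
  rintro ((h | h) | (h | h)) <;> omega

lemma adj_of_fst_add_one {u v : TowerVertex k t} (hlevel : u.1.1 + 1 = v.1.1)
    (h : (towerGraph k t).Adj u v) :
    (u.1.2 = 0 ∧ v.1.2 ≤ (k - 2) / 2) ∨ (u.1.2 = 1 ∧ k / 2 ≤ v.1.2) := by
  rcases h with (h | h) | (h | h) <;> omega

lemma eq_of_fst_eq_of_snd_eq {u v : TowerVertex k t} (h₁ : u.1.1 = v.1.1) (h₂ : u.1.2 = v.1.2) :
    u = v :=
  Subtype.ext (Prod.ext h₁ h₂)

-- `A ∩ {v_{i,0}, v_{i,1}}`: the missing edge of `V_i`, whose ends carry all edges up to `V_{i+1}`.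
def anchors (A : Finset (TowerVertex k t)) (i : ℕ) : Finset (TowerVertex k t) :=
  {v ∈ layer (·.1.1) A i | v.1.2 ≤ 1}

variable {A S : Finset (TowerVertex k t)} {i : ℕ}

lemma card_le_of_subset_layer (hS : S ⊆ layer (·.1.1) A i) {J : Finset ℕ}
    (hJ : ∀ v ∈ S, v.1.2 ∈ J) : #S ≤ #J :=
  card_le_card_of_injOn (·.1.2) hJ fun _ hu _ hv h => eq_of_fst_eq_of_snd_eq
    (((mem_layer _).1 (hS hu)).2.trans ((mem_layer _).1 (hS hv)).2.symm) h

lemma card_anchors_le_two : #(anchors A i) ≤ 2 := by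
  simpa using card_le_of_subset_layer (S := anchors A i) (filter_subset _ _) (J := range 2)
    fun v hv => mem_range.2 (by have := (mem_filter.1 hv).2; omega)

lemma card_le_card_anchors_add (hS : S ⊆ layer (·.1.1) A i) {m : ℕ} (hm : ∀ v ∈ S, v.1.2 ≤ m) :
    #S ≤ #(anchors A i) + (m - 1) := by
  have hlow : #{v ∈ S | v.1.2 ≤ 1} ≤ #(anchors A i) :=
    card_le_card fun v hv => mem_filter.2 ⟨hS (mem_filter.1 hv).1, (mem_filter.1 hv).2⟩
  have hhigh : #{v ∈ S | ¬ v.1.2 ≤ 1} ≤ #(Icc 2 m) :=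
    card_le_of_subset_layer ((filter_subset _ _).trans hS) fun v hv => by
      have := mem_filter.1 hv
      exact mem_Icc.2 ⟨by omega, hm v this.1⟩
  have := card_filter_add_card_filter_not (s := S) (p := fun v => v.1.2 ≤ 1)
  simp only [Nat.card_Icc] at hhigh
  omega

lemma card_interedges_le (hk : 2 ≤ k) (hS : ∀ u ∈ layerBelow (·.1.1) A i, ∀ v ∈ layer (·.1.1) A i,
      (towerGraph k t).Adj u v → v ∈ S) :
    #((towerGraph k t).interedges (layerBelow (·.1.1) A i) (layer (·.1.1) A i)) ≤ #S := by
  refine card_le_card_of_injOn Prod.snd (fun p hp => ?_) fun p hp q hq h => ?_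
  · obtain ⟨hu, hv, hadj⟩ := (towerGraph k t).mem_interedges_iff.1 hp
    exact hS _ hu _ hv hadj
  · obtain ⟨hpu, hpv, hpadj⟩ := (towerGraph k t).mem_interedges_iff.1 (mem_coe.1 hp)
    obtain ⟨hqu, hqv, hqadj⟩ := (towerGraph k t).mem_interedges_iff.1 (mem_coe.1 hq)
    simp only [mem_layer, mem_layerBelow] at hpu hpv hqu hqv
    have h' : p.2 = q.2 := h
    rw [h'] at hpadj hpv
    have := adj_of_fst_add_one (by omega) hpadj
    have := adj_of_fst_add_one (by omega) hqadj
    exact Prod.ext (eq_of_fst_eq_of_snd_eq (by omega) (by omega)) h'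

lemma card_interedges_bound (hk : 4 ≤ k) (hbelow : #(layerBelow (·.1.1) A i) ≤ 1) :
    let x := #((towerGraph k t).interedges (layerBelow (·.1.1) A i) (layer (·.1.1) A i))
    2 * x + 4 ≤ 2 * #(anchors A i) + k ∨ 2 * x + 1 ≤ k := by
  intro x
  by_cases h : ∃ u ∈ layerBelow (·.1.1) A i, u.1.2 = 1
  · -- the one vertex below is `v_{i-1,1}`
    right
    obtain ⟨u₁, hu₁, hu₁1⟩ := h
    have hx : x ≤ #{v ∈ layer (·.1.1) A i | k / 2 ≤ v.1.2} := by
      refine card_interedges_le (by omega) fun u hu v hv hadj => mem_filter.2 ⟨hv, ?_⟩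
      have := card_le_one.1 hbelow u hu u₁ hu₁
      subst this
      have := adj_of_fst_add_one (by simp only [mem_layer, mem_layerBelow] at hu hv; omega) hadj
      omega
    have hhigh : #{v ∈ layer (·.1.1) A i | k / 2 ≤ v.1.2} ≤ #(Icc (k / 2) (k - 2)) :=
      card_le_of_subset_layer (filter_subset _ _)
        fun v hv => mem_Icc.2 ⟨(mem_filter.1 hv).2, snd_le (by omega) v⟩
    simp only [Nat.card_Icc] at hhigh
    omega
  · left
    simp only [not_exists, not_and] at h
    have hx : x ≤ #{v ∈ layer (·.1.1) A i | v.1.2 ≤ (k - 2) / 2} := by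
      refine card_interedges_le (by omega) fun u hu v hv hadj => mem_filter.2 ⟨hv, ?_⟩
      have := adj_of_fst_add_one (by simp only [mem_layer, mem_layerBelow] at hu hv; omega) hadj
      have := h u hu
      omega
    have := card_le_card_anchors_add (S := {v ∈ layer (·.1.1) A i | v.1.2 ≤ (k - 2) / 2})
      (filter_subset _ _) fun v hv => (mem_filter.1 hv).2
    omega

theorem levelCounts_layer (hk : 4 ≤ k) (A : Finset (TowerVertex k t)) (i : ℕ) :
    LevelCounts k #(layer (·.1.1) A i) #(anchors A i)
      (edgeCountOn (towerGraph k t) ↑(layer (·.1.1) A i))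
      #((towerGraph k t).interedges (layerBelow (·.1.1) A i) (layer (·.1.1) A i)) where
  four_le := hk
  anchors_le := card_anchors_le_two
  card_le := card_le_card_anchors_add subset_rfl fun v _ => snd_le (by omega) v
  edges_le := two_mul_edgeCountOn_add_card_le _ _
  edges_le_of_anchors_eq_two h := by
    obtain ⟨u, v, huv, huv'⟩ := card_eq_two.1 h
    have hu : u ∈ anchors A i := by simp [huv']
    have hv : v ∈ anchors A i := by simp [huv']
    simp only [anchors, mem_filter, mem_layer] at hu hv
    have hsnd : u.1.2 ≠ v.1.2 := fun h => huv (eq_of_fst_eq_of_snd_eq (by omega) h)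
    rcases (show u.1.2 = 0 ∧ v.1.2 = 1 ∨ v.1.2 = 0 ∧ u.1.2 = 1 by omega) with h | h
    · exact two_mul_edgeCountOn_add_card_add_two_le _ (mem_layer _ |>.2 hu.1)
        (mem_layer _ |>.2 hv.1) huv (not_adj_of_snd_eq_zero_one (by omega) h.1 h.2)
    · exact two_mul_edgeCountOn_add_card_add_two_le _ (mem_layer _ |>.2 hv.1)
        (mem_layer _ |>.2 hu.1) huv.symm (not_adj_of_snd_eq_zero_one (by omega) h.1 h.2)
  cross_le := card_interedges_le (by omega) fun _ _ _ hv _ => hv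

theorem layerPotential_nonneg (hk : 4 ≤ k) (A : Finset (TowerVertex k t)) (i : ℕ) :
    0 ≤ layerPotential k (towerGraph k t) (·.1.1) A i :=
  (levelCounts_layer hk A i).potential_nonneg

theorem two_mul_sub_le_sum_layerPotential (hk : 4 ≤ k) (A : Finset (TowerVertex k t))
    (hA : 2 ≤ #A) :
    2 * ((k : ℤ) + 1) * ((k : ℤ) - 2) - 2 * ((k : ℤ) - 1) ≤
      ∑ i ∈ range (t + 1), layerPotential k (towerGraph k t) (·.1.1) A i := by
  set ρ := layerPotential k (towerGraph k t) (·.1.1) A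
  have hρ : ∀ i ∈ range (t + 1), 0 ≤ ρ i := fun i _ => layerPotential_nonneg hk A i
  have hrange : ∀ v : TowerVertex k t, v.1.1 ∈ range (t + 1) :=
    fun v => mem_range.2 (Nat.lt_succ_of_le (fst_le v))
  obtain ⟨u, huA, hu⟩ := A.exists_min_image (·.1.1) (card_pos.1 (by omega))
  have hcounts := levelCounts_layer hk A u.1.1
  have hx : #((towerGraph k t).interedges (layerBelow (·.1.1) A u.1.1)
      (layer (·.1.1) A u.1.1)) = 0 := by
    rw [layerBelow_eq_empty _ hu, SimpleGraph.interedges_empty_left, card_empty]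
  by_cases ha : 2 ≤ #(layer (·.1.1) A u.1.1)
  · exact (hcounts.two_mul_sub_le_potential hx ha).trans (single_le_sum hρ (hrange u))
  -- `u` is alone in the lowest layer, so the next occupied layer has at most `u` below it.
  have hrest : (A \ layer (·.1.1) A u.1.1).Nonempty := by
    rw [← card_pos, card_sdiff_of_subset fun w hw => ((mem_layer _).1 hw).1]
    omega
  obtain ⟨v, hvA, hv⟩ := (A \ layer (·.1.1) A u.1.1).exists_min_image (·.1.1) hrest
  simp only [mem_sdiff, mem_layer, not_and] at hvA hv
  have hbelow : layerBelow (·.1.1) A v.1.1 ⊆ layer (·.1.1) A u.1.1 := fun w hw => by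
    simp only [mem_layerBelow, mem_layer] at hw ⊢
    refine ⟨hw.1, by_contra fun h => ?_⟩
    have := hv w ⟨hw.1, fun _ => h⟩
    omega
  have hne : u.1.1 ≠ v.1.1 := Ne.symm (hvA.2 hvA.1)
  calc 2 * ((k : ℤ) + 1) * ((k : ℤ) - 2) - 2 * ((k : ℤ) - 1)
      = ((k : ℤ) + 1) * ((k : ℤ) - 2) + (((k : ℤ) + 1) * ((k : ℤ) - 2) - 2 * ((k : ℤ) - 1)) := by
        ring
    _ ≤ ρ u.1.1 + ρ v.1.1 := by
        refine add_le_add (hcounts.le_potential hx (card_pos.2 ⟨u, by simp [huA]⟩))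
          ((levelCounts_layer hk A v.1.1).sub_le_potential (card_pos.2 ⟨v, by simp [hvA.1]⟩)
            (card_interedges_bound hk ((card_le_card hbelow).trans (by omega))))
    _ = ∑ i ∈ {u.1.1, v.1.1}, ρ i := (sum_pair hne).symm
    _ ≤ ∑ i ∈ range (t + 1), ρ i :=
        sum_le_sum_of_subset_of_nonneg (by simp [insert_subset_iff, hrange]) fun i hi _ => hρ i hi

theorem two_mul_le_layerPotential_zero (hk : 4 ≤ k) (A : Finset (TowerVertex k t))
    (hbase : ∀ x : TowerVertex k t, x.1.1 = 0 → x ∈ A) :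
    2 * ((k : ℤ) + 1) * ((k : ℤ) - 2) ≤ layerPotential k (towerGraph k t) (·.1.1) A 0 := by
  have hcounts := levelCounts_layer hk A 0
  have hbase0 : (⟨(0, 0), by simp [towerValid]⟩ : TowerVertex k t) ∈ anchors A 0 :=
    mem_filter.2 ⟨(mem_layer _).2 ⟨hbase _ rfl, rfl⟩, zero_le_one⟩
  have hbase1 : (⟨(0, 1), by simp [towerValid]⟩ : TowerVertex k t) ∈ anchors A 0 :=
    mem_filter.2 ⟨(mem_layer _).2 ⟨hbase _ rfl, rfl⟩, le_rfl⟩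
  have hs : #(anchors A 0) = 2 := le_antisymm card_anchors_le_two <| one_lt_card.2
    ⟨_, hbase0, _, hbase1, fun h => zero_ne_one (congrArg (fun v : TowerVertex k t => v.1.2) h)⟩
  have hlayer : anchors A 0 = layer (·.1.1) A 0 := filter_true_of_mem fun v hv => by
    have := ((mem_layer _).1 hv).2
    rcases v.2 with ⟨_, h⟩ | ⟨h, _⟩ <;> omega
  have ha : #(layer (·.1.1) A 0) = 2 := hlayer ▸ hs
  have hw : edgeCountOn (towerGraph k t) ↑(layer (·.1.1) A 0) = 0 := by
    have := hcounts.edges_le_of_anchors_eq_two hs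
    rw [ha] at this
    omega
  have hbelow : layerBelow (·.1.1) A 0 = ∅ := layerBelow_eq_empty _ fun v _ => Nat.zero_le _
  simp only [layerPotential, potentialOfCounts, ha, hw, hbelow, SimpleGraph.interedges_empty_left,
    card_empty]
  push_cast
  linarith

end TowerVertex

theorem tower_potential_bound_general (k t : ℕ) (hk : 4 ≤ k)
    (A : Finset (TowerVertex k t)) (hA : 2 ≤ A.card) :
    2 * ((k : ℤ) + 1) * ((k : ℤ) - 2) - 2 * ((k : ℤ) - 1) ≤
        potential k (towerGraph k t) A ∧
      ((∀ x : TowerVertex k t, x.1.1 = 0 → x ∈ A) →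
        2 * ((k : ℤ) + 1) * ((k : ℤ) - 2) ≤ potential k (towerGraph k t) A) := by
  have hsum := sum_layerPotential_le_potential (towerGraph k t) (·.1.1) (by omega : 1 ≤ k)
    (fun _ _ => TowerVertex.fst_le_fst_add_one_of_adj) A
    fun v _ => Nat.lt_succ_of_le (TowerVertex.fst_le v)
  refine ⟨(TowerVertex.two_mul_sub_le_sum_layerPotential hk A hA).trans hsum, fun hbase => ?_⟩
  calc 2 * ((k : ℤ) + 1) * ((k : ℤ) - 2)
      ≤ layerPotential k (towerGraph k t) (·.1.1) A 0 :=
        TowerVertex.two_mul_le_layerPotential_zero hk A hbase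
    _ ≤ ∑ i ∈ range (t + 1), layerPotential k (towerGraph k t) (·.1.1) A i :=
        single_le_sum (fun i _ => TowerVertex.layerPotential_nonneg hk A i) (by simp)
    _ ≤ potential k (towerGraph k t) A := hsum

/-- For every `A ⊆ V(T_{k,t})` with `|A| ≥ 2`, `ρ_{k,T}(A) ≥ 2(k+1)(k-2) - 2(k-1)`;
moreover if `A` contains the base `V₀` then `ρ_{k,T}(A) ≥ 2(k+1)(k-2)`. -/
theorem tower_potential_bound (k t : ℕ) (hk : 4 ≤ k) (ht : 1 ≤ t)
    (A : Finset (TowerVertex k t)) (hA : 2 ≤ A.card) :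
    2 * ((k : ℤ) + 1) * ((k : ℤ) - 2) - 2 * ((k : ℤ) - 1) ≤
        potential k (towerGraph k t) A ∧
      ((∀ x : TowerVertex k t, x.1.1 = 0 → x ∈ A) →
        2 * ((k : ℤ) + 1) * ((k : ℤ) - 2) ≤ potential k (towerGraph k t) A) :=
  tower_potential_bound_general k t hk A hA
end

section
/- If f is a proper (k-1)-coloring of the (k,t)-tower T_{k,t} with f(v_{0,1}) = f(v_{0,0}), then f(v_{i,1}) = f(v_{i,0}) for every 1 ≤ i ≤ t. -/
/-- If a proper `(k-1)`-coloring of `T_{k,t}` gives the two base vertices equal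
colors, then `f(v_{i,0}) = f(v_{i,1})` for all `1 ≤ i ≤ t`. -/
theorem tower_coloring (k t : ℕ) (hk : 4 ≤ k) (ht : 1 ≤ t)
    (f : TowerVertex k t → Fin (k - 1))
    (hf : ∀ x y, (towerGraph k t).Adj x y → f x ≠ f y)
    (hbase : ∀ x y : TowerVertex k t, x.1 = (0, 0) → y.1 = (0, 1) → f x = f y) :
    ∀ i, 1 ≤ i → i ≤ t →
      ∀ x y : TowerVertex k t, x.1 = (i, 0) → y.1 = (i, 1) → f x = f y := by
  have key : ∀ i, i ≤ t → ∀ x y : TowerVertex k t,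
      x.1 = (i, 0) → y.1 = (i, 1) → f x = f y := by
    intro i
    induction i with
    | zero => intro _ x y hx hy; exact hbase x y hx hy
    | succ n ih =>
      intro hle x y hx hy
      have hnt : n ≤ t := Nat.le_of_succ_le hle
      have hv0 : towerValid k t (n, 0) := by
        rcases Nat.eq_zero_or_pos n with h | h
        · exact Or.inl ⟨h, by norm_num⟩
        · exact Or.inr ⟨h, hnt, by omega⟩
      have hv1 : towerValid k t (n, 1) := by
        rcases Nat.eq_zero_or_pos n with h | h
        · exact Or.inl ⟨h, by norm_num⟩
        · exact Or.inr ⟨h, hnt, by omega⟩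
      set prev0 : TowerVertex k t := ⟨(n, 0), hv0⟩ with hp0
      set prev1 : TowerVertex k t := ⟨(n, 1), hv1⟩ with hp1
      have hc : f prev0 = f prev1 := ih hnt prev0 prev1 rfl rfl
      set c := f prev1 with hcdef
      -- the vertices of level n+1
      have hvert : ∀ j : ℕ, j ≤ k - 2 → towerValid k t (n + 1, j) :=
        fun j hj => Or.inr ⟨by omega, hle, hj⟩
      set vert : ℕ → TowerVertex k t :=
        fun j => ⟨(n + 1, min j (k - 2)), hvert _ (min_le_right _ _)⟩ with hvdef
      have hv1' : ∀ j, j ≤ k - 2 → (vert j).1 = (n + 1, j) := by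
        intro j hj; simp [hvdef, min_eq_left hj]
      -- adjacency within level n+1
      have hsame : ∀ j₁ j₂ : ℕ, j₁ ≤ k - 2 → j₂ ≤ k - 2 → j₁ ≠ j₂ →
          ¬(j₁ ≤ 1 ∧ j₂ ≤ 1) → f (vert j₁) ≠ f (vert j₂) := by
        intro j₁ j₂ h₁ h₂ hne hnb
        apply hf
        left; left
        rw [hv1' j₁ h₁, hv1' j₂ h₂]
        exact ⟨rfl, by omega, by simpa using hne, by simpa using hnb⟩
      -- adjacency to prev0 / prev1
      have hA0 : ∀ j, j ≤ k - 2 → j ≤ (k - 2) / 2 → f prev0 ≠ f (vert j) := by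
        intro j hj hj2
        apply hf
        left; right
        rw [hv1' j hj]
        exact ⟨rfl, Or.inl ⟨rfl, hj2⟩⟩
      have hA1 : ∀ j, j ≤ k - 2 → k / 2 ≤ j → f prev1 ≠ f (vert j) := by
        intro j hj hj2
        apply hf
        left; right
        rw [hv1' j hj]
        exact ⟨rfl, Or.inr ⟨rfl, hj2⟩⟩
      have hcvert : ∀ j, j ≤ k - 2 → c ≠ f (vert j) := by
        intro j hj
        rcases (by omega : j ≤ (k - 2) / 2 ∨ k / 2 ≤ j) with h | h
        · exact hc ▸ hA0 j hj h
        · exact hA1 j hj h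
      -- the set of colors of middle vertices
      set S : Finset (Fin (k - 1)) :=
        (Finset.Icc 2 (k - 2)).image (fun j => f (vert j)) with hSdef
      have hScard : S.card = k - 3 := by
        rw [hSdef, Finset.card_image_of_injOn, Nat.card_Icc]
        · omega
        · intro j₁ h₁ j₂ h₂ heq
          simp only [Finset.coe_Icc, Set.mem_Icc] at h₁ h₂
          by_contra hne
          exact hsame j₁ j₂ h₁.2 h₂.2 hne (by omega) heq
      have hcS : c ∉ S := by
        intro hmem
        obtain ⟨j, hj, heq⟩ := Finset.mem_image.mp hmem
        simp only [Finset.mem_Icc] at hj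
        exact hcvert j hj.2 heq.symm
      set A : Finset (Fin (k - 1)) := insert c S with hAdef
      have hAcard : A.card = k - 2 := by
        rw [hAdef, Finset.card_insert_of_notMem hcS, hScard]; omega
      have hmem : ∀ j, j ≤ 1 → f (vert j) ∈ Aᶜ := by
        intro j hj
        rw [Finset.mem_compl, hAdef, Finset.mem_insert]
        push_neg
        constructor
        · intro h
          exact hcvert j (by omega) h.symm
        · intro hmem
          obtain ⟨j', hj', heq⟩ := Finset.mem_image.mp hmem
          simp only [Finset.mem_Icc] at hj'
          exact hsame j' j hj'.2 (by omega) (by omega) (by omega) heq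
      have hcompl : (Aᶜ : Finset (Fin (k - 1))).card = 1 := by
        rw [Finset.card_compl, hAcard, Fintype.card_fin]; omega
      have hxv : x = vert 0 := Subtype.ext (by rw [hx, hv1' 0 (by omega)])
      have hyv : y = vert 1 := Subtype.ext (by rw [hy, hv1' 1 (by omega)])
      rw [hxv, hyv]
      exact Finset.card_le_one.mp (le_of_eq hcompl) _ (hmem 0 (by omega)) _
        (hmem 1 le_rfl)
  intro i _ hit x y hx hy
  exact key i hit x y hx hy
end

section
/- For every proper (k-1)-coloring f of the supercomplex S_{k,t}, the two base vertices receive different colors: f(v_{0,1}) ≠ f(v_{0,0}). -/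
/-- Valid vertices of the tower complex `C_{k,t}`: a vertex is `(c, i, j)` where
`c` is the tower index (`1 ≤ c ≤ k`) for level `1 ≤ i ≤ t` with `j ≤ k-2`, and the
two common base vertices are `(0, 0, 0)` and `(0, 0, 1)`. -/
def complexValid (k t : ℕ) (p : ℕ × ℕ × ℕ) : Prop :=
  (p.1 = 0 ∧ p.2.1 = 0 ∧ p.2.2 < 2) ∨
  (1 ≤ p.1 ∧ p.1 ≤ k ∧ 1 ≤ p.2.1 ∧ p.2.1 ≤ t ∧ p.2.2 ≤ k - 2)

/-- Vertices of the tower complex / supercomplex. -/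
def ComplexVertex (k t : ℕ) : Type := {p : ℕ × ℕ × ℕ // complexValid k t p}

/-- The connection rule between consecutive levels: `v_{i-1,0}` is joined to
`v_{i,j'}` for `j' ≤ ⌊(k-2)/2⌋` and `v_{i-1,1}` to `v_{i,j'}` for `⌊k/2⌋ ≤ j'`. -/
def levelAdj (k : ℕ) (j j' : ℕ) : Prop :=
  (j = 0 ∧ j' ≤ (k - 2) / 2) ∨ (j = 1 ∧ k / 2 ≤ j')

/-- One-directional adjacency of the tower complex: inside each tower a level
induces `K_{k-1}` minus the edge `v_{i,0}v_{i,1}`, consecutive levels are joined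
by the rule `levelAdj`, and the common base is joined to level 1 of every tower. -/
def complexAdjAux (k : ℕ) (p q : ℕ × ℕ × ℕ) : Prop :=
  (p.1 = q.1 ∧ p.2.1 = q.2.1 ∧ 1 ≤ p.2.1 ∧ p.2.2 ≠ q.2.2 ∧ ¬(p.2.2 ≤ 1 ∧ q.2.2 ≤ 1)) ∨
  (p.1 = q.1 ∧ 1 ≤ p.2.1 ∧ q.2.1 = p.2.1 + 1 ∧ levelAdj k p.2.2 q.2.2) ∨
  (p.2.1 = 0 ∧ q.2.1 = 1 ∧ levelAdj k p.2.2 q.2.2)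

/-- The tower complex `C_{k,t}`: `k` copies of `T_{k,t}` sharing a common base. -/
def complexGraph (k t : ℕ) : SimpleGraph (ComplexVertex k t) where
  Adj x y := complexAdjAux k x.1 y.1 ∨ complexAdjAux k y.1 x.1
  symm := ⟨fun x y h => Or.symm h⟩
  loopless := by
    constructor
    rintro ⟨⟨c, i, j⟩, hv⟩ h
    simp [complexAdjAux, levelAdj] at h
    rcases hv with hv | hv <;> omega

/-- One-directional bridge adjacency: for `1 ≤ i < j ≤ k`, the edge
`v^i_{t,0}v^j_{t,1}` if `j - i ≤ k/2`, and the edge `v^i_{t,1}v^j_{t,0}` otherwise. -/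
def bridgeAdjAux (k t : ℕ) (p q : ℕ × ℕ × ℕ) : Prop :=
  ∃ i j : ℕ, 1 ≤ i ∧ i < j ∧ j ≤ k ∧
    ((j - i ≤ k / 2 ∧ p = (i, t, 0) ∧ q = (j, t, 1)) ∨
     (k / 2 < j - i ∧ p = (i, t, 1) ∧ q = (j, t, 0)))

/-- The supercomplex `S_{k,t}`: the tower complex together with the bridge edges. -/
def superGraph (k t : ℕ) : SimpleGraph (ComplexVertex k t) where
  Adj x y := complexAdjAux k x.1 y.1 ∨ complexAdjAux k y.1 x.1 ∨
    bridgeAdjAux k t x.1 y.1 ∨ bridgeAdjAux k t y.1 x.1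
  symm := ⟨fun x y h => by tauto⟩
  loopless := by
    constructor
    rintro ⟨⟨c, i, j⟩, hv⟩ h
    simp [complexAdjAux, levelAdj, bridgeAdjAux, Prod.ext_iff] at h
    rcases hv with hv | hv <;> rcases h with h | h | h <;> omega


/-- Convenient constructor for valid tower vertices. -/
lemma mkValid (k t c i j : ℕ) (h1 : 1 ≤ c) (h2 : c ≤ k) (h3 : 1 ≤ i) (h4 : i ≤ t)
    (h5 : j ≤ k - 2) : complexValid k t (c, i, j) :=
  Or.inr ⟨h1, h2, h3, h4, h5⟩

/-- Pigeonhole: if `g` avoids `a` on `{0,…,k-2}` and is injective except possibly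
on the pair `{0,1}`, then `g 0 = g 1`. -/
lemma key_pigeon (k : ℕ) (hk : 4 ≤ k) (a : Fin (k - 1)) (g : ℕ → Fin (k - 1))
    (hinj : ∀ j j', j ≤ k - 2 → j' ≤ k - 2 → j ≠ j' → ¬(j ≤ 1 ∧ j' ≤ 1) → g j ≠ g j')
    (ha : ∀ j, j ≤ k - 2 → g j ≠ a) : g 0 = g 1 := by
  by_contra h01
  have hG : Function.Injective (fun j : Fin (k - 1) => g j.1) := by
    rintro ⟨j, hj⟩ ⟨j', hj'⟩ hgg
    simp only at hgg
    by_contra hne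
    have hne' : j ≠ j' := by simpa [Fin.ext_iff] using hne
    by_cases hb : j ≤ 1 ∧ j' ≤ 1
    · obtain ⟨hb1, hb2⟩ := hb
      rcases Nat.le_one_iff_eq_zero_or_eq_one.mp hb1 with rfl | rfl <;>
        rcases Nat.le_one_iff_eq_zero_or_eq_one.mp hb2 with rfl | rfl
      · exact hne' rfl
      · exact h01 hgg
      · exact h01 hgg.symm
      · exact hne' rfl
    · exact hinj j j' (by omega) (by omega) hne' hb hgg
  have hsurj := Finite.injective_iff_surjective.mp hG
  obtain ⟨⟨j, hj⟩, hja⟩ := hsurj a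
  exact ha j (by omega) hja

/-- If the two distinguished vertices below level `i` get the same color, then the
two special vertices of level `i` get the same color. -/
lemma level_equal (k t : ℕ) (hk : 4 ≤ k) (f : ComplexVertex k t → Fin (k - 1))
    (hadj : ∀ u v : ComplexVertex k t, complexAdjAux k u.1 v.1 → f u ≠ f v)
    (c i : ℕ) (hc1 : 1 ≤ c) (hc2 : c ≤ k) (hi1 : 1 ≤ i) (hi2 : i ≤ t)
    (u0 u1 : ComplexVertex k t) (hu : f u0 = f u1)
    (h0 : ∀ j, j ≤ (k - 2) / 2 → j ≤ k - 2 → complexAdjAux k u0.1 (c, i, j))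
    (h1 : ∀ j, k / 2 ≤ j → j ≤ k - 2 → complexAdjAux k u1.1 (c, i, j)) :
    f ⟨(c, i, 0), mkValid k t c i 0 hc1 hc2 hi1 hi2 (Nat.zero_le _)⟩ =
    f ⟨(c, i, 1), mkValid k t c i 1 hc1 hc2 hi1 hi2 (by omega)⟩ := by
  set g : ℕ → Fin (k - 1) := fun j =>
    f ⟨(c, i, min j (k - 2)), mkValid k t c i _ hc1 hc2 hi1 hi2 (min_le_right _ _)⟩ with hgdef
  have hg : ∀ j (hj : j ≤ k - 2),
      g j = f ⟨(c, i, j), mkValid k t c i j hc1 hc2 hi1 hi2 hj⟩ := by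
    intro j hj
    exact congrArg f (Subtype.ext (by simp [Nat.min_eq_left hj]))
  have key := key_pigeon k hk (f u0) g ?_ ?_
  · have e0 := hg 0 (Nat.zero_le _)
    have e1 := hg 1 (by omega)
    rw [e0, e1] at key
    exact key
  · intro j j' hj hj' hne hb
    rw [hg j hj, hg j' hj']
    exact hadj _ _ (Or.inl ⟨rfl, rfl, hi1, hne, hb⟩)
  · intro j hj
    rw [hg j hj]
    rcases le_or_gt j ((k - 2) / 2) with hle | hgt
    · exact (hadj u0 _ (h0 j hle hj)).symm
    · have hk2 : k / 2 ≤ j := by omega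
      rw [hu]
      exact (hadj u1 _ (h1 j hk2 hj)).symm

/-- For every proper `(k-1)`-coloring `f` of the supercomplex `S_{k,t}`, the
two base vertices receive different colors. -/
theorem super_base_colors_differ (k t : ℕ) (hk : 4 ≤ k) (ht : 1 ≤ t)
    (f : ComplexVertex k t → Fin (k - 1))
    (hf : ∀ x y, (superGraph k t).Adj x y → f x ≠ f y) :
    ∀ x y : ComplexVertex k t, x.1 = (0, 0, 0) → y.1 = (0, 0, 1) → f x ≠ f y := by
  intro x y hx hy heq
  have hadj : ∀ u v : ComplexVertex k t, complexAdjAux k u.1 v.1 → f u ≠ f v :=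
    fun u v h => hf u v (Or.inl h)
  have hbr : ∀ u v : ComplexVertex k t, bridgeAdjAux k t u.1 v.1 → f u ≠ f v :=
    fun u v h => hf u v (Or.inr (Or.inr (Or.inl h)))
  -- the tower coloring lemma, by induction on the level
  have tower : ∀ i (hi1 : 1 ≤ i) (hi2 : i ≤ t) c (hc1 : 1 ≤ c) (hc2 : c ≤ k),
      f ⟨(c, i, 0), mkValid k t c i 0 hc1 hc2 hi1 hi2 (Nat.zero_le _)⟩ =
      f ⟨(c, i, 1), mkValid k t c i 1 hc1 hc2 hi1 hi2 (by omega)⟩ := by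
    intro i
    induction i with
    | zero => intro h; omega
    | succ n ih =>
      intro hi1 hi2 c hc1 hc2
      rcases Nat.eq_zero_or_pos n with hn | hn
      · subst hn
        apply level_equal k t hk f hadj c 1 hc1 hc2 le_rfl hi2 x y heq
        · intro j hj hjk
          refine Or.inr (Or.inr ?_)
          rw [hx]
          exact ⟨rfl, rfl, Or.inl ⟨rfl, hj⟩⟩
        · intro j hj hjk
          refine Or.inr (Or.inr ?_)
          rw [hy]
          exact ⟨rfl, rfl, Or.inr ⟨rfl, hj⟩⟩
      · have hn2 : n ≤ t := by omega
        apply level_equal k t hk f hadj c (n + 1) hc1 hc2 (by omega) hi2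
          ⟨(c, n, 0), mkValid k t c n 0 hc1 hc2 hn hn2 (Nat.zero_le _)⟩
          ⟨(c, n, 1), mkValid k t c n 1 hc1 hc2 hn hn2 (by omega)⟩
          (ih hn hn2 c hc1 hc2)
        · intro j hj hjk
          exact Or.inr (Or.inl ⟨rfl, hn, rfl, Or.inl ⟨rfl, hj⟩⟩)
        · intro j hj hjk
          exact Or.inr (Or.inl ⟨rfl, hn, rfl, Or.inr ⟨rfl, hj⟩⟩)
  -- tops of distinct towers get distinct colors
  have htop : ∀ c c' (h1 : 1 ≤ c) (h2 : c < c') (h3 : c' ≤ k),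
      f ⟨(c, t, 0), mkValid k t c t 0 h1 (by omega) ht le_rfl (Nat.zero_le _)⟩ ≠
      f ⟨(c', t, 0), mkValid k t c' t 0 (by omega) h3 ht le_rfl (Nat.zero_le _)⟩ := by
    intro c c' h1 h2 h3
    rcases le_or_gt (c' - c) (k / 2) with hle | hgt
    · have hb := hbr ⟨(c, t, 0), mkValid k t c t 0 h1 (by omega) ht le_rfl (Nat.zero_le _)⟩
        ⟨(c', t, 1), mkValid k t c' t 1 (by omega) h3 ht le_rfl (by omega)⟩
        ⟨c, c', h1, h2, h3, Or.inl ⟨hle, rfl, rfl⟩⟩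
      have e2 := tower t ht le_rfl c' (by omega) h3
      exact fun e => hb (e.trans e2)
    · have hb := hbr ⟨(c, t, 1), mkValid k t c t 1 h1 (by omega) ht le_rfl (by omega)⟩
        ⟨(c', t, 0), mkValid k t c' t 0 (by omega) h3 ht le_rfl (Nat.zero_le _)⟩
        ⟨c, c', h1, h2, h3, Or.inr ⟨hgt, rfl, rfl⟩⟩
      have e2 := tower t ht le_rfl c h1 (by omega)
      exact fun e => hb (e2.symm.trans e)
  -- pigeonhole on the k tower tops
  have hcard : k ≤ k - 1 := by
    have hinj : Function.Injective (fun c : Fin k =>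
        f ⟨(c.1 + 1, t, 0), mkValid k t (c.1 + 1) t 0 (Nat.succ_le_succ (Nat.zero_le _))
          c.isLt ht le_rfl (Nat.zero_le _)⟩) := by
      intro c c' he
      by_contra hne
      have hne' : c.1 ≠ c'.1 := fun h => hne (Fin.ext h)
      rcases hne'.lt_or_gt with h | h
      · exact htop (c.1 + 1) (c'.1 + 1) (by omega) (by omega) c'.isLt he
      · exact htop (c'.1 + 1) (c.1 + 1) (by omega) (by omega) c.isLt he.symm
    simpa using Fintype.card_le_of_injective _ hinj
  omega
end

section
/- Let G be a graph and A₀ a minimal (by size) vertex subset with |A₀| ≥ 2 violating the sparsity bound |E(G[A])| ≤ 1 + c(|A|-2) for a constant c ≥ 1. Then G[A₀] is 2-connected. -/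
/-- A vertex set `A` is `c`-bad if `|A| ≥ 2` and `|E(G[A])| > 1 + c(|A|-2)`. -/
def IsBad {V : Type*} (G : SimpleGraph V) (c : ℝ) (A : Finset V) : Prop :=
  2 ≤ A.card ∧ 1 + c * ((A.card : ℝ) - 2) < (edgeCountOn G ↑A : ℝ)

section EdgeCount

variable {V : Type*} (G : SimpleGraph V)

theorem edgeCountOn_le_choose_two (A : Finset V) : edgeCountOn G ↑A ≤ A.card.choose 2 := by
  classical
  rw [← Sym2.card_image_offDiag, ← Set.ncard_coe_finset]
  refine Set.ncard_le_ncard ?_ (Finset.finite_toSet _)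
  rintro e ⟨he, hA⟩
  induction e using Sym2.ind with
  | _ a b =>
    rw [Sym2.forall_mem_pair] at hA
    exact Finset.mem_image_of_mem Sym2.mk.uncurry
      (Finset.mem_offDiag.2 ⟨hA.1, hA.2, G.ne_of_adj he⟩)

theorem edgeCountOn_le_add {A : Set V} {A₁ A₂ : Finset V}
    (hcover : ∀ a b, G.Adj a b → a ∈ A → b ∈ A → a ∈ A₁ ∧ b ∈ A₁ ∨ a ∈ A₂ ∧ b ∈ A₂) :
    edgeCountOn G A ≤ edgeCountOn G ↑A₁ + edgeCountOn G ↑A₂ := by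
  have finite_edges (B : Finset V) : {e ∈ G.edgeSet | ∀ v ∈ e, v ∈ (B : Set V)}.Finite :=
    B.sym2.finite_toSet.subset fun e he => Finset.mem_sym2_iff.2 he.2
  refine (Set.ncard_le_ncard ?_ ((finite_edges A₁).union (finite_edges A₂))).trans
    (Set.ncard_union_le _ _)
  rintro e ⟨he, hA⟩
  induction e using Sym2.ind with
  | _ a b =>
    rw [Sym2.forall_mem_pair] at hA
    simp only [Set.mem_union, Set.mem_sep_iff, Sym2.forall_mem_pair, Finset.mem_coe]
    have := hcover a b he hA.1 hA.2
    tauto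

end EdgeCount

theorem SimpleGraph.exists_split_of_not_preconnected_induce {V : Type*} [DecidableEq V]
    (G : SimpleGraph V) {S : Finset V} (h : ¬ (G.induce (S : Set V)).Preconnected) :
    ∃ B ⊆ S, B.Nonempty ∧ (S \ B).Nonempty ∧ ∀ a ∈ B, ∀ b ∈ S \ B, ¬ G.Adj a b := by
  classical
  obtain ⟨u, v, huv⟩ : ∃ u v, ¬ (G.induce (S : Set V)).Reachable u v := by
    simpa [SimpleGraph.Preconnected] using h
  set B := S.filter fun a => ∃ ha : a ∈ S, (G.induce (S : Set V)).Reachable u ⟨a, ha⟩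
  have mem_B {a : V} (ha : a ∈ S) : a ∈ B ↔ (G.induce (S : Set V)).Reachable u ⟨a, ha⟩ := by
    simp [B, ha]
  refine ⟨B, Finset.filter_subset _ _, ⟨u, (mem_B u.2).2 .rfl⟩,
    ⟨v, Finset.mem_sdiff.2 ⟨v.2, fun hv => huv ((mem_B v.2).1 hv)⟩⟩, ?_⟩
  intro a ha b hb hab
  obtain ⟨hbS, hbB⟩ := Finset.mem_sdiff.1 hb
  have haS := Finset.filter_subset _ _ ha
  have hab' : (G.induce (S : Set V)).Adj ⟨a, haS⟩ ⟨b, hbS⟩ := hab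
  exact hbB ((mem_B hbS).2 (((mem_B haS).1 ha).trans hab'.reachable))

theorem IsBad.three_le_card {V : Type*} {G : SimpleGraph V} {c : ℝ} {A : Finset V}
    (h : IsBad G c A) : 3 ≤ A.card := by
  obtain ⟨h2, hlt⟩ := h
  by_contra! h3
  have hcard : A.card = 2 := by omega
  have hedges := edgeCountOn_le_choose_two G A
  rw [hcard] at hlt hedges
  norm_num at hlt hedges
  omega

section MinimalBad

variable {V : Type*} {G : SimpleGraph V} {c : ℝ} {A₀ : Finset V}

theorem edgeCountOn_le_of_card_lt (hmin : ∀ A : Finset V, IsBad G c A → A₀.card ≤ A.card)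
    {A : Finset V} (hA : A.card < A₀.card) :
    (edgeCountOn G ↑A : ℝ) ≤ max 0 (1 + c * ((A.card : ℝ) - 2)) := by
  rcases le_or_gt 2 A.card with h2 | h2
  · exact le_max_of_le_right (not_lt.1 fun hlt => hA.not_ge (hmin A ⟨h2, hlt⟩))
  · have : edgeCountOn G ↑A = 0 := Nat.eq_zero_of_le_zero
      ((edgeCountOn_le_choose_two G A).trans (Nat.choose_eq_zero_of_lt h2).le)
    simp [this]

theorem lt_card_add_card_of_edge_cover (hc : 1 ≤ c) (hbad : IsBad G c A₀)
    (hmin : ∀ A : Finset V, IsBad G c A → A₀.card ≤ A.card) {A₁ A₂ : Finset V}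
    (h₁ : A₁.card < A₀.card) (h₂ : A₂.card < A₀.card)
    (hcover : ∀ a b, G.Adj a b → a ∈ A₀ → b ∈ A₀ → a ∈ A₁ ∧ b ∈ A₁ ∨ a ∈ A₂ ∧ b ∈ A₂) :
    A₀.card + 1 < A₁.card + A₂.card := by
  by_contra! hsum
  have hsplit : (edgeCountOn G ↑A₀ : ℝ) ≤ edgeCountOn G ↑A₁ + edgeCountOn G ↑A₂ := by
    exact_mod_cast edgeCountOn_le_add G hcover
  have e₁ := edgeCountOn_le_of_card_lt hmin h₁
  have e₂ := edgeCountOn_le_of_card_lt hmin h₂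
  have hn : (2 : ℝ) ≤ A₀.card := by exact_mod_cast hbad.1
  have hn₁ : (A₁.card : ℝ) + 1 ≤ A₀.card := by exact_mod_cast h₁
  have hn₂ : (A₂.card : ℝ) + 1 ≤ A₀.card := by exact_mod_cast h₂
  have hsumR : (A₁.card : ℝ) + A₂.card ≤ A₀.card + 1 := by exact_mod_cast hsum
  have := hbad.2
  -- if neither maximum is `0`, their sum is at most `1 + c(|A₀| - 2) + (1 - c)`
  rcases max_cases (0 : ℝ) (1 + c * ((A₁.card : ℝ) - 2)) with ⟨m₁, -⟩ | ⟨m₁, -⟩ <;>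
  rcases max_cases (0 : ℝ) (1 + c * ((A₂.card : ℝ) - 2)) with ⟨m₂, -⟩ | ⟨m₂, -⟩ <;>
  rw [m₁] at e₁ <;> rw [m₂] at e₂ <;> nlinarith

theorem preconnected_induce_of_card_sdiff_le_one [DecidableEq V] (hc : 1 ≤ c)
    (hbad : IsBad G c A₀) (hmin : ∀ A : Finset V, IsBad G c A → A₀.card ≤ A.card)
    {S : Finset V} (hS : S ⊆ A₀) (hK : (A₀ \ S).card ≤ 1) :
    (G.induce (S : Set V)).Preconnected := by
  by_contra h
  obtain ⟨B, hBS, hB, hSB, hno⟩ := G.exists_split_of_not_preconnected_induce h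
  have card_B : (B ∪ (A₀ \ S)).card = B.card + (A₀ \ S).card :=
    Finset.card_union_of_disjoint (Finset.disjoint_of_subset_left hBS Finset.disjoint_sdiff)
  have card_SB : (S \ B ∪ (A₀ \ S)).card = (S \ B).card + (A₀ \ S).card :=
    Finset.card_union_of_disjoint
      (Finset.disjoint_of_subset_left Finset.sdiff_subset Finset.disjoint_sdiff)
  have card_S := Finset.card_sdiff_add_card_eq_card hBS
  have card_A₀ := Finset.card_sdiff_add_card_eq_card hS
  have hB₀ := hB.card_pos
  have hSB₀ := hSB.card_pos
  have := lt_card_add_card_of_edge_cover hc hbad hmin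
    (A₁ := B ∪ (A₀ \ S)) (A₂ := S \ B ∪ (A₀ \ S)) (by omega) (by omega) ?_
  · omega
  intro a b hab ha hb
  have hab' (haB : a ∈ B) (hbS : b ∈ S) (hbB : b ∉ B) : False :=
    hno a haB b (Finset.mem_sdiff.2 ⟨hbS, hbB⟩) hab
  have hba' (hbB : b ∈ B) (haS : a ∈ S) (haB : a ∉ B) : False :=
    hno b hbB a (Finset.mem_sdiff.2 ⟨haS, haB⟩) hab.symm
  have haS := @hBS a
  have hbS := @hBS b
  simp only [Finset.mem_union, Finset.mem_sdiff]
  tauto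

end MinimalBad

/-- If `A₀` is a minimal (by size) bad set for a constant `c ≥ 1`, then the
induced subgraph `G[A₀]` is 2-connected: `|A₀| ≥ 3`, `G[A₀]` is connected, and
it remains connected after deleting any single vertex. -/
theorem minimal_bad_set_two_connected {V : Type*} [DecidableEq V]
    (G : SimpleGraph V) (c : ℝ) (hc : 1 ≤ c) (A₀ : Finset V)
    (hbad : IsBad G c A₀) (hmin : ∀ A : Finset V, IsBad G c A → A₀.card ≤ A.card) :
    3 ≤ A₀.card ∧ (G.induce (↑A₀ : Set V)).Connected ∧
      ∀ x ∈ A₀, (G.induce ((A₀.erase x : Finset V) : Set V)).Connected := by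
  have h3 := hbad.three_le_card
  have connected {S : Finset V} (hS : S ⊆ A₀) (hK : (A₀ \ S).card ≤ 1) :
      (G.induce (S : Set V)).Connected := by
    obtain ⟨a, ha⟩ : S.Nonempty :=
      Finset.card_pos.1 (by have := Finset.card_sdiff_add_card_eq_card hS; omega)
    have : Nonempty (S : Set V) := ⟨⟨a, ha⟩⟩
    exact ⟨preconnected_induce_of_card_sdiff_le_one hc hbad hmin hS hK⟩
  exact ⟨h3, connected subset_rfl (by simp),
    fun x hx => connected (A₀.erase_subset x) (by simp [Finset.sdiff_erase_self hx])⟩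
end
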